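/- Let μ, r ∈ ℝ, σ > 0, u > 0 and x ∈ (0,1). Let Z be a standard Gaussian random variable and set A := exp((μ − r − σ²/2)·u + σ·√u·Z) and Y := x·A/(x·A + 1 − x). Then the law of Y is supported in (0,1) and is absolutely continuous with respect to Lebesgue measure, with density z ↦ p(u,z,x) on (0,1), where p(u,z,x) := exp( −(1/(2σ²u))·( (r − μ + σ²/2)·u + ln( z(1−x)/((1−z)x) ) )² ) / ( σ·z·(1−z)·√(2πu) ); that is, for every Borel set B ⊆ (0,1), P(Y ∈ B) = ∫_B p(u,z,x) dz. -/

import Mathlib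

open Set MeasureTheory ProbabilityTheory

/-- The stochastic exponential factor `A(u,z) = exp((μ-r-σ²/2)u + σ√u z)`. -/
noncomputable def stochExp (μ r σ u z : ℝ) : ℝ :=
  Real.exp ((μ - r - σ^2 / 2) * u + σ * Real.sqrt u * z)

/-- The uncontrolled wealth fraction `Y(u,x,z) = x A / (x A + 1 - x)`. -/
noncomputable def wealthFrac (μ r σ u x z : ℝ) : ℝ :=
  x * stochExp μ r σ u z / (x * stochExp μ r σ u z + 1 - x)

/-- The transition density `p(u,z,x)` of the uncontrolled wealth-fraction process. -/
noncomputable def wealthFracDensity (μ r σ u z x : ℝ) : ℝ :=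
  Real.exp (-(1 / (2 * σ^2 * u)) *
      ((r - μ + σ^2 / 2) * u + Real.log (z * (1 - x) / ((1 - z) * x)))^2)
    / (σ * z * (1 - z) * Real.sqrt (2 * Real.pi * u))

/-- The inverse of `z ↦ wealthFrac μ r σ u x z`, defined on `(0,1)`. -/
noncomputable def invMap (μ r σ u x y : ℝ) : ℝ :=
  (Real.log y - Real.log (1 - y) + Real.log ((1 - x) / x)
    - (μ - r - σ^2 / 2) * u) / (σ * Real.sqrt u)

section aux

variable {μ r σ u x : ℝ}

lemma stochExp_pos (μ r σ u z : ℝ) : 0 < stochExp μ r σ u z := Real.exp_pos _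

lemma denom_pos (hx : x ∈ Ioo (0:ℝ) 1) (z : ℝ) :
    0 < x * stochExp μ r σ u z + 1 - x := by
  have := mul_pos hx.1 (stochExp_pos μ r σ u z)
  linarith [hx.2]

lemma wealthFrac_mem (hx : x ∈ Ioo (0:ℝ) 1) (z : ℝ) :
    wealthFrac μ r σ u x z ∈ Ioo (0:ℝ) 1 := by
  have hd := denom_pos (μ := μ) (r := r) (σ := σ) (u := u) hx z
  have hxA := mul_pos hx.1 (stochExp_pos μ r σ u z)
  rw [wealthFrac, mem_Ioo]
  refine ⟨div_pos hxA hd, ?_⟩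
  rw [div_lt_one hd]; linarith [hx.2]

lemma a_pos (hσ : 0 < σ) (hu : 0 < u) : 0 < σ * Real.sqrt u :=
  mul_pos hσ (Real.sqrt_pos.2 hu)

lemma invMap_wealthFrac (hσ : 0 < σ) (hu : 0 < u) (hx : x ∈ Ioo (0:ℝ) 1) (z : ℝ) :
    invMap μ r σ u x (wealthFrac μ r σ u x z) = z := by
  have ha := a_pos hσ hu
  have hd := denom_pos (μ := μ) (r := r) (σ := σ) (u := u) hx z
  have hA := stochExp_pos μ r σ u z
  have hxA := mul_pos hx.1 hA
  have h1x : (0:ℝ) < 1 - x := by linarith [hx.2]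
  have h1 : (1:ℝ) - wealthFrac μ r σ u x z = (1 - x) / (x * stochExp μ r σ u z + 1 - x) := by
    rw [wealthFrac]; field_simp; ring
  have hlog : Real.log (wealthFrac μ r σ u x z) - Real.log (1 - wealthFrac μ r σ u x z)
      = Real.log x + ((μ - r - σ^2 / 2) * u + σ * Real.sqrt u * z) - Real.log (1 - x) := by
    rw [h1, wealthFrac, Real.log_div hxA.ne' hd.ne', Real.log_div h1x.ne' hd.ne',
      Real.log_mul hx.1.ne' hA.ne', stochExp, Real.log_exp]
    ring
  rw [invMap, hlog, Real.log_div h1x.ne' hx.1.ne']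
  field_simp
  ring

lemma wealthFrac_invMap (hσ : 0 < σ) (hu : 0 < u) (hx : x ∈ Ioo (0:ℝ) 1)
    {y : ℝ} (hy : y ∈ Ioo (0:ℝ) 1) :
    wealthFrac μ r σ u x (invMap μ r σ u x y) = y := by
  have ha := a_pos hσ hu
  have h1x : (0:ℝ) < 1 - x := by linarith [hx.2]
  have h1y : (0:ℝ) < 1 - y := by linarith [hy.2]
  have hexp : stochExp μ r σ u (invMap μ r σ u x y) = y * ((1 - x) / x) / (1 - y) := by
    rw [stochExp, invMap, mul_div_cancel₀ _ ha.ne']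
    have harg : (μ - r - σ^2/2) * u + (Real.log y - Real.log (1-y) + Real.log ((1-x)/x)
        - (μ - r - σ^2/2) * u) = Real.log y + Real.log ((1-x)/x) - Real.log (1-y) := by ring
    rw [harg, Real.exp_sub, Real.exp_add, Real.exp_log hy.1, Real.exp_log h1y,
      Real.exp_log (div_pos h1x hx.1)]
  rw [wealthFrac, div_eq_iff (denom_pos hx _).ne', hexp]
  field_simp [hx.1.ne', h1y.ne']
  ring

lemma invMap_injOn (hσ : 0 < σ) (hu : 0 < u) (hx : x ∈ Ioo (0:ℝ) 1) :
    InjOn (invMap μ r σ u x) (Ioo 0 1) := fun y₁ h₁ y₂ h₂ h => by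
  rw [← wealthFrac_invMap hσ hu hx h₁, h, wealthFrac_invMap hσ hu hx h₂]

lemma invMap_hasDeriv (hσ : 0 < σ) (hu : 0 < u) {y : ℝ} (hy : y ∈ Ioo (0:ℝ) 1) :
    HasDerivAt (invMap μ r σ u x) (1 / (σ * Real.sqrt u * (y * (1 - y)))) y := by
  have ha := a_pos hσ hu
  have h1y : (0:ℝ) < 1 - y := by linarith [hy.2]
  have h1 : HasDerivAt Real.log y⁻¹ y := Real.hasDerivAt_log hy.1.ne'
  have h2 : HasDerivAt (fun t : ℝ => Real.log (1 - t)) (-(1 - y)⁻¹) y := by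
    have h3 : HasDerivAt (fun t : ℝ => 1 - t) (-1) y := by
      simpa using (hasDerivAt_id y).const_sub 1
    have h5 := h3.log h1y.ne'
    simp only [neg_div, one_div] at h5
    exact h5
  have h4 : HasDerivAt (invMap μ r σ u x)
      ((y⁻¹ - -(1 - y)⁻¹) / (σ * Real.sqrt u)) y :=
    (((h1.sub h2).add_const _).sub_const _).div_const _
  have hval : (y⁻¹ - -(1 - y)⁻¹) / (σ * Real.sqrt u)
      = 1 / (σ * Real.sqrt u * (y * (1 - y))) := by
    rw [div_eq_div_iff ha.ne' (mul_pos ha (mul_pos hy.1 h1y)).ne']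
    field_simp [hy.1.ne', h1y.ne']
    ring
  exact hval ▸ h4

lemma wealthFrac_continuous (hx : x ∈ Ioo (0:ℝ) 1) :
    Continuous (fun z => wealthFrac μ r σ u x z) := by
  have hA : Continuous (fun z => stochExp μ r σ u z) :=
    Real.continuous_exp.comp (by continuity)
  exact ((continuous_const.mul hA).div
    (((continuous_const.mul hA).add continuous_const).sub continuous_const)
    (fun z => (denom_pos hx z).ne'))

lemma preimage_eq_image (hσ : 0 < σ) (hu : 0 < u) (hx : x ∈ Ioo (0:ℝ) 1)
    {B : Set ℝ} (hB : B ⊆ Ioo (0:ℝ) 1) :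
    (fun z => wealthFrac μ r σ u x z) ⁻¹' B = invMap μ r σ u x '' B := by
  ext z
  constructor
  · intro hz
    exact ⟨wealthFrac μ r σ u x z, hz, invMap_wealthFrac hσ hu hx z⟩
  · rintro ⟨y, hyB, rfl⟩
    show wealthFrac μ r σ u x (invMap μ r σ u x y) ∈ B
    rw [wealthFrac_invMap hσ hu hx (hB hyB)]
    exact hyB

lemma density_eq (hσ : 0 < σ) (hu : 0 < u) (hx : x ∈ Ioo (0:ℝ) 1)
    {y : ℝ} (hy : y ∈ Ioo (0:ℝ) 1) :
    |1 / (σ * Real.sqrt u * (y * (1 - y)))| •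
      gaussianPDFReal 0 1 (invMap μ r σ u x y) = wealthFracDensity μ r σ u y x := by
  have ha := a_pos hσ hu
  have h1x : (0:ℝ) < 1 - x := by linarith [hx.2]
  have h1y : (0:ℝ) < 1 - y := by linarith [hy.2]
  have hcpos : 0 < 1 / (σ * Real.sqrt u * (y * (1 - y))) :=
    div_pos one_pos (mul_pos ha (mul_pos hy.1 h1y))
  have hL : Real.log (y * (1 - x) / ((1 - y) * x)) =
      Real.log y - Real.log (1 - y) + Real.log ((1 - x) / x) := by
    rw [Real.log_div (mul_pos hy.1 h1x).ne' (mul_pos h1y hx.1).ne',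
      Real.log_mul hy.1.ne' h1x.ne', Real.log_mul h1y.ne' hx.1.ne',
      Real.log_div h1x.ne' hx.1.ne']
    ring
  have ha2 : (σ * Real.sqrt u)^2 = σ^2 * u := by
    rw [mul_pow, Real.sq_sqrt hu.le]
  have hσu : σ^2 * u ≠ 0 := by positivity
  have hexp_eq : -(invMap μ r σ u x y - 0)^2 / (2 * (1:ℝ)) =
      -(1 / (2 * σ^2 * u)) *
        ((r - μ + σ^2 / 2) * u + Real.log (y * (1 - x) / ((1 - y) * x)))^2 := by
    rw [hL, invMap, sub_zero, div_pow, ha2]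
    field_simp
    ring
  rw [smul_eq_mul, gaussianPDFReal, wealthFracDensity]
  push_cast
  rw [hexp_eq, abs_of_pos hcpos, mul_one,
    show Real.sqrt (2 * Real.pi * u) = Real.sqrt (2 * Real.pi) * Real.sqrt u from
      Real.sqrt_mul (by positivity) u]
  have hs2pi : Real.sqrt (2 * Real.pi) ≠ 0 := by positivity
  have hsu : Real.sqrt u ≠ 0 := (Real.sqrt_pos.2 hu).ne'
  field_simp

end aux

/-- The law of `Y = x A/(x A + 1 − x)`, with `A = exp((μ−r−σ²/2)u + σ√u Z)` and `Z`
standard Gaussian, is supported in `(0,1)` and has density `z ↦ p(u,z,x)` there: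
`P(Y ∈ B) = ∫_B p(u,z,x) dz` for every Borel `B ⊆ (0,1)`. -/
theorem wealthFrac_law_density (μ r σ u x : ℝ) (hσ : 0 < σ) (hu : 0 < u)
    (hx : x ∈ Ioo (0:ℝ) 1) :
    (Measure.map (fun z => wealthFrac μ r σ u x z) (gaussianReal 0 1)) (Ioo 0 1)ᶜ = 0 ∧
    ∀ B : Set ℝ, MeasurableSet B → B ⊆ Ioo (0:ℝ) 1 →
      (Measure.map (fun z => wealthFrac μ r σ u x z) (gaussianReal 0 1)) B
        = ENNReal.ofReal (∫ z in B, wealthFracDensity μ r σ u z x) := by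
  have hmeas : Measurable (fun z => wealthFrac μ r σ u x z) :=
    (wealthFrac_continuous hx).measurable
  constructor
  · rw [Measure.map_apply hmeas measurableSet_Ioo.compl]
    have : (fun z => wealthFrac μ r σ u x z) ⁻¹' (Ioo 0 1)ᶜ = ∅ := by
      ext z; simp [wealthFrac_mem hx z]
    simp [this]
  · intro B hB hBsub
    rw [Measure.map_apply hmeas hB, preimage_eq_image hσ hu hx hBsub,
      gaussianReal_apply_eq_integral 0 one_ne_zero]
    congr 1
    rw [integral_image_eq_integral_abs_deriv_smul hB
      (fun y hy => (invMap_hasDeriv hσ hu (hBsub hy)).hasDerivWithinAt)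
      ((invMap_injOn hσ hu hx).mono hBsub)]
    exact setIntegral_congr_fun hB (fun y hy => density_eq hσ hu hx (hBsub hy))
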